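/- In the truth-biased model with lexicographic tie-breaking, the additive price of anarchy is at most 2n/3: if a is the truthful profile with winner of score s* and b ≠ a is a PNE with winner c_j ≠ truthful winner, then s* ≤ 2n/3. -/
import Mathlib


open Finset

/-- A ballot vector: each voter either abstains (`none`) or votes for a candidate. -/
abbrev Ballot (n m : ℕ) := Fin n → Option (Fin m)

/-- The plurality score of candidate `c` under ballot vector `b`. -/
def sc {n m : ℕ} (b : Ballot n m) (c : Fin m) : ℕ :=
  (univ.filter fun i => b i = some c).card

/-- The maximum plurality score. -/
def maxScore {n m : ℕ} (b : Ballot n m) : ℕ :=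
  univ.sup fun c : Fin m => sc b c

/-- The winning set `W(b)`: candidates with maximum score. -/
def winSet {n m : ℕ} (b : Ballot n m) : Finset (Fin m) :=
  univ.filter fun c => sc b c = maxScore b

/-- `H(b)`: candidates whose score is the maximum minus one. -/
def Hset {n m : ℕ} (b : Ballot n m) : Finset (Fin m) :=
  univ.filter fun c => sc b c + 1 = maxScore b

/-- `H'(b)`: candidates whose score is the maximum minus two. -/
def H'set {n m : ℕ} (b : Ballot n m) : Finset (Fin m) :=
  univ.filter fun c => sc b c + 2 = maxScore b

/-- `c` is the winner under lexicographic tie-breaking: the minimum-index member of `W(b)`. -/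
def IsLexWin {n m : ℕ} (b : Ballot n m) (c : Fin m) : Prop :=
  c ∈ winSet b ∧ ∀ c' ∈ winSet b, (c : ℕ) ≤ (c' : ℕ)

/-- The (degenerate) lottery induced by lexicographic tie-breaking. -/
def pLex {n m : ℕ} (b : Ballot n m) : Fin m → ℚ := fun c =>
  if c ∈ winSet b ∧ ∀ c' ∈ winSet b, (c : ℕ) ≤ (c' : ℕ) then 1 else 0

/-- The lottery induced by random-candidate tie-breaking: uniform over `W(b)`. -/
def pRC {n m : ℕ} (b : Ballot n m) : Fin m → ℚ := fun c =>
  if c ∈ winSet b then ((winSet b).card : ℚ)⁻¹ else 0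

/-- The lottery induced by random-voter tie-breaking: a uniformly random voter's
favourite member of `W(b)` is elected. -/
def pRV {n m : ℕ} (u : Fin n → Fin m → ℕ) (b : Ballot n m) : Fin m → ℚ := fun c =>
  ((univ.filter fun i : Fin n =>
      c ∈ winSet b ∧ ∀ c' ∈ winSet b, u i c' ≤ u i c).card : ℚ) / (n : ℚ)

/-- Expected utility of a lottery `p` for a voter with utility function `ui`. -/
def EU {m : ℕ} (ui : Fin m → ℕ) (p : Fin m → ℚ) : ℚ := ∑ c, p c * (ui c : ℚ)

/-- Payoff of lazy voter `i`: expected utility plus a bonus `ε` for abstaining. -/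
def lazyU {n m : ℕ} (p : Ballot n m → Fin m → ℚ) (u : Fin n → Fin m → ℕ)
    (ε : ℚ) (i : Fin n) (b : Ballot n m) : ℚ :=
  EU (u i) (p b) + if b i = none then ε else 0

/-- Pure Nash equilibrium of the lazy-voter game. -/
def lazyPNE {n m : ℕ} (p : Ballot n m → Fin m → ℚ) (u : Fin n → Fin m → ℕ)
    (ε : ℚ) (b : Ballot n m) : Prop :=
  ∀ (i : Fin n) (b' : Option (Fin m)),
    lazyU p u ε i (Function.update b i b') ≤ lazyU p u ε i b

/-- View a non-abstaining (truth-biased) ballot vector as a general ballot vector. -/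
def tv {n m : ℕ} (b : Fin n → Fin m) : Ballot n m := fun i => some (b i)

/-- Payoff of truth-biased voter `i`: expected utility plus a bonus `ε` for voting
truthfully (abstention, which would yield `-∞`, is never used). -/
def tbU {n m : ℕ} (p : Ballot n m → Fin m → ℚ) (u : Fin n → Fin m → ℕ)
    (a : Fin n → Fin m) (ε : ℚ) (i : Fin n) (b : Fin n → Fin m) : ℚ :=
  EU (u i) (p (tv b)) + if b i = a i then ε else 0

/-- Pure Nash equilibrium of the truth-biased game. -/
def tbPNE {n m : ℕ} (p : Ballot n m → Fin m → ℚ) (u : Fin n → Fin m → ℕ)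
    (a : Fin n → Fin m) (ε : ℚ) (b : Fin n → Fin m) : Prop :=
  ∀ (i : Fin n) (b' : Fin m),
    tbU p u a ε i (Function.update b i b') ≤ tbU p u a ε i b


lemma sc_tv_sum {n m : ℕ} (b : Fin n → Fin m) (c : Fin m) :
    sc (tv b) c = ∑ j, if b j = c then 1 else 0 := by
  rw [sc, Finset.card_filter]
  exact Finset.sum_congr rfl fun j _ => by simp [tv]

lemma sc_update {n m : ℕ} (b : Fin n → Fin m) (i : Fin n) (x : Fin m) (c : Fin m) :
    sc (tv (Function.update b i x)) c + (if b i = c then 1 else 0)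
      = sc (tv b) c + (if x = c then 1 else 0) := by
  rw [sc_tv_sum, sc_tv_sum,
    ← Finset.sum_erase_add _ _ (Finset.mem_univ i),
    ← Finset.sum_erase_add _ _ (Finset.mem_univ i)]
  have h1 : ∑ j ∈ Finset.univ.erase i, (if Function.update b i x j = c then 1 else 0)
      = ∑ j ∈ Finset.univ.erase i, (if b j = c then 1 else 0) :=
    Finset.sum_congr rfl fun j hj => by
      rw [Function.update_of_ne (Finset.ne_of_mem_erase hj)]
  rw [h1, Function.update_self]
  ring

lemma sc_le_maxScore {n m : ℕ} (b : Ballot n m) (c : Fin m) : sc b c ≤ maxScore b :=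
  Finset.le_sup (Finset.mem_univ c)

lemma mem_winSet_iff {n m : ℕ} {b : Ballot n m} {c : Fin m} :
    c ∈ winSet b ↔ sc b c = maxScore b := by simp [winSet]

lemma lexwin_unique {n m : ℕ} {b : Ballot n m} {c c' : Fin m}
    (h : IsLexWin b c) (h' : IsLexWin b c') : c = c' :=
  Fin.ext (le_antisymm (h.2 c' h'.1) (h'.2 c h.1))

lemma exists_lexwin {n m : ℕ} (hm : 0 < m) (b : Ballot n m) : ∃ c, IsLexWin b c := by
  have : Nonempty (Fin m) := ⟨⟨0, hm⟩⟩
  obtain ⟨c, -, hc⟩ := Finset.exists_mem_eq_sup Finset.univ Finset.univ_nonempty (sc b)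
  have hne : (winSet b).Nonempty := ⟨c, mem_winSet_iff.mpr hc.symm⟩
  exact ⟨(winSet b).min' hne, (winSet b).min'_mem hne,
    fun c' hc' => (winSet b).min'_le c' hc'⟩

lemma EU_pLex {n m : ℕ} {b : Ballot n m} {w : Fin m} (hw : IsLexWin b w) (ui : Fin m → ℕ) :
    EU ui (pLex b) = ui w := by
  have hw' : w ∈ winSet b ∧ ∀ c' ∈ winSet b, (w : ℕ) ≤ (c' : ℕ) := hw
  rw [EU, Finset.sum_eq_single w]
  · rw [pLex]; rw [if_pos hw', one_mul]
  · intro c _ hc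
    rw [pLex, if_neg, zero_mul]
    exact fun hcontra => hc (lexwin_unique hcontra hw)
  · simp

lemma sc_tv_add_le {n m : ℕ} (f : Fin n → Fin m) (c1 c2 : Fin m) (h : c1 ≠ c2) :
    sc (tv f) c1 + sc (tv f) c2 ≤ n := by
  rw [sc_tv_sum, sc_tv_sum, ← Finset.sum_add_distrib]
  calc (∑ j : Fin n, ((if f j = c1 then 1 else 0) + if f j = c2 then 1 else 0))
      ≤ ∑ _j : Fin n, 1 := by
        refine Finset.sum_le_sum fun j _ => ?_
        rcases eq_or_ne (f j) c1 with h1 | h1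
        · rw [if_pos h1, if_neg fun h2 => h (h1.symm.trans h2)]
        · rw [if_neg h1]; split_ifs <;> omega
    _ = n := by simp

lemma sc_tv_add3_le {n m : ℕ} (f : Fin n → Fin m) (c1 c2 c3 : Fin m)
    (h12 : c1 ≠ c2) (h13 : c1 ≠ c3) (h23 : c2 ≠ c3) :
    sc (tv f) c1 + sc (tv f) c2 + sc (tv f) c3 ≤ n := by
  rw [sc_tv_sum, sc_tv_sum, sc_tv_sum, ← Finset.sum_add_distrib, ← Finset.sum_add_distrib]
  calc (∑ j : Fin n, (((if f j = c1 then 1 else 0) + if f j = c2 then 1 else 0)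
        + if f j = c3 then 1 else 0))
      ≤ ∑ _j : Fin n, 1 := by
        refine Finset.sum_le_sum fun j _ => ?_
        rcases eq_or_ne (f j) c1 with h1 | h1
        · rw [if_pos h1, if_neg fun h2 => h12 (h1.symm.trans h2),
            if_neg fun h3 => h13 (h1.symm.trans h3)]
        · rw [if_neg h1]
          rcases eq_or_ne (f j) c2 with h2 | h2
          · rw [if_pos h2, if_neg fun h3 => h23 (h2.symm.trans h3)]
          · rw [if_neg h2]; split_ifs <;> omega
    _ = n := by simp

lemma sc_tv_one_le {n m : ℕ} (f : Fin n → Fin m) (i : Fin n) :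
    1 ≤ sc (tv f) (f i) := by
  rw [sc_tv_sum]
  calc (1 : ℕ) = if f i = f i then 1 else 0 := by simp
    _ ≤ _ := Finset.single_le_sum (f := fun j => if f j = f i then 1 else 0)
      (fun j _ => by positivity) (Finset.mem_univ i)
theorem stmt17 {n m : ℕ} (hn : 0 < n) (hm : 0 < m)
    (u : Fin n → Fin m → ℕ) (hu : ∀ i, Function.Injective (u i))
    (ε : ℚ) (hε0 : 0 < ε) (hε : ε < min ((m : ℚ)⁻¹) ((n : ℚ)⁻¹))
    (a : Fin n → Fin m) (ha : ∀ i c, u i c ≤ u i (a i))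
    (b : Fin n → Fin m) (hab : b ≠ a) (hb : tbPNE pLex u a ε b)
    (cw cj : Fin m) (hcw : IsLexWin (tv a) cw) (hcj : IsLexWin (tv b) cj)
    (hne : cj ≠ cw) :
    3 * maxScore (tv a) ≤ 2 * n := by
  classical
  have hscj : sc (tv b) cj = maxScore (tv b) := mem_winSet_iff.mp hcj.1
  have hscw : sc (tv a) cw = maxScore (tv a) := mem_winSet_iff.mp hcw.1
  -- PNE consequence: deviating to one's truthful vote must strictly hurt
  have key : ∀ (i : Fin n) (w' : Fin m), b i ≠ a i →
      IsLexWin (tv (Function.update b i (a i))) w' → u i w' < u i cj := by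
    intro i w' hnei hw'
    have h := hb i (a i)
    simp only [tbU] at h
    rw [EU_pLex hcj (u i), EU_pLex hw' (u i), Function.update_self,
      if_pos rfl, if_neg hnei, add_zero] at h
    have h2 : (u i w' : ℚ) < (u i cj : ℚ) := by linarith
    exact_mod_cast h2
  -- L1 : every voter votes truthfully or for the winner cj
  have L1 : ∀ i, b i = a i ∨ b i = cj := by
    intro i
    by_contra hcon
    push_neg at hcon
    obtain ⟨h1, h2⟩ := hcon
    obtain ⟨w', hw'⟩ := exists_lexwin hm (tv (Function.update b i (a i)))
    have hu' := key i w' h1 hw'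
    rcases eq_or_ne w' (a i) with h3 | h3
    · rw [h3] at hu'
      exact absurd hu' (not_lt.mpr (ha i cj))
    · have e1 := sc_update b i (a i) cj
      rw [if_neg h2, add_zero] at e1
      have e2 := sc_update b i (a i) w'
      rw [if_neg (fun hh : a i = w' => h3 hh.symm), add_zero] at e2
      have hmax' : sc (tv (Function.update b i (a i))) w'
          = maxScore (tv (Function.update b i (a i))) := mem_winSet_iff.mp hw'.1
      have g2 : sc (tv (Function.update b i (a i))) cj
          ≤ sc (tv (Function.update b i (a i))) w' := by
        rw [hmax']; exact sc_le_maxScore _ _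
      have g4 : sc (tv b) w' ≤ maxScore (tv b) := sc_le_maxScore _ _
      have hx : (if a i = cj then 1 else 0) ≤ 1 := by split_ifs <;> omega
      have hy : (0:ℕ) ≤ (if b i = w' then 1 else 0) := Nat.zero_le _
      have m1 : sc (tv b) w' = maxScore (tv b) := by omega
      have m2 : sc (tv (Function.update b i (a i))) cj
          = maxScore (tv (Function.update b i (a i))) := by omega
      have le1 : (w' : ℕ) ≤ (cj : ℕ) := hw'.2 cj (mem_winSet_iff.mpr m2)
      have le2 : (cj : ℕ) ≤ (w' : ℕ) := hcj.2 w' (mem_winSet_iff.mpr m1)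
      have hwcj : w' = cj := Fin.ext (le_antisymm le1 le2)
      rw [hwcj] at hu'
      exact lt_irrefl _ hu'
  -- a deviating voter exists
  obtain ⟨i0, hi0⟩ : ∃ i, b i ≠ a i := Function.ne_iff.mp hab
  have hbi0 : b i0 = cj := (L1 i0).resolve_left hi0
  have hai0 : a i0 ≠ cj := fun h => hi0 (hbi0.trans h.symm)
  obtain ⟨w', hw'⟩ := exists_lexwin hm (tv (Function.update b i0 (a i0)))
  have hkey := key i0 w' hi0 hw'
  have hw'cj : w' ≠ cj := fun h => by rw [h] at hkey; exact lt_irrefl _ hkey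
  have hw'ai : w' ≠ a i0 := fun h => by
    rw [h] at hkey; exact absurd hkey (not_lt.mpr (ha i0 cj))
  -- score relations for the deviation b' = update b i0 (a i0)
  have e1 := sc_update b i0 (a i0) cj
  rw [if_pos hbi0, if_neg hai0, add_zero] at e1
  have e2 := sc_update b i0 (a i0) (a i0)
  rw [if_neg hi0, if_pos rfl, add_zero] at e2
  have e3 := sc_update b i0 (a i0) w'
  rw [if_neg (show b i0 ≠ w' by rw [hbi0]; exact Ne.symm hw'cj),
    if_neg (fun hh : a i0 = w' => hw'ai hh.symm), add_zero, add_zero] at e3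
  have hmax' : sc (tv (Function.update b i0 (a i0))) w'
      = maxScore (tv (Function.update b i0 (a i0))) := mem_winSet_iff.mp hw'.1
  have g2 : sc (tv (Function.update b i0 (a i0))) cj
      ≤ sc (tv (Function.update b i0 (a i0))) w' := by
    rw [hmax']; exact sc_le_maxScore _ _
  have g2' : sc (tv (Function.update b i0 (a i0))) (a i0)
      ≤ sc (tv (Function.update b i0 (a i0))) w' := by
    rw [hmax']; exact sc_le_maxScore _ _
  have g4 : sc (tv b) w' ≤ maxScore (tv b) := sc_le_maxScore _ _
  have hMt : maxScore (tv b) ≤ sc (tv b) w' + 1 := by omega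
  have hup : sc (tv b) (a i0) + 1 ≤ sc (tv b) w' := by omega
  -- case structure: threshold candidate
  have hcase : sc (tv b) w' = maxScore (tv b) ∨
      (sc (tv b) w' + 1 = maxScore (tv b) ∧ (w' : ℕ) < (cj : ℕ)) := by
    rcases eq_or_ne (sc (tv b) w') (maxScore (tv b)) with h | h
    · exact Or.inl h
    · right
      have hcjmem : sc (tv (Function.update b i0 (a i0))) cj
          = maxScore (tv (Function.update b i0 (a i0))) := by omega
      have hle := hw'.2 cj (mem_winSet_iff.mpr hcjmem)
      have hne' : (w' : ℕ) ≠ (cj : ℕ) := fun hh => hw'cj (Fin.ext hh)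
      omega
  -- L3 : all truthful supporters of w' vote for w' in b
  have L3 : ∀ j, a j = w' → b j = w' := by
    intro j haj
    rcases L1 j with h | h
    · rw [h, haj]
    · exfalso
      have hnej : b j ≠ a j := by rw [h, haj]; exact Ne.symm hw'cj
      have f1 := sc_update b j (a j) w'
      rw [if_pos haj, if_neg (show b j ≠ w' by rw [h]; exact Ne.symm hw'cj), add_zero] at f1
      have f2 := sc_update b j (a j) cj
      rw [if_pos h, if_neg (fun hh : a j = cj => hw'cj (haj.symm.trans hh)), add_zero] at f2
      have f3 : ∀ c, c ≠ w' → c ≠ cj → sc (tv (Function.update b j (a j))) c = sc (tv b) c := by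
        intro c hc1 hc2
        have := sc_update b j (a j) c
        rw [if_neg (fun hh : b j = c => hc2 (h.symm.trans hh).symm),
          if_neg (fun hh : a j = c => hc1 (haj.symm.trans hh).symm), add_zero, add_zero] at this
        exact this
      have fmax : ∀ c, sc (tv (Function.update b j (a j))) c ≤ sc (tv b) w' + 1 := by
        intro c
        rcases eq_or_ne c w' with rfl | hc1
        · omega
        rcases eq_or_ne c cj with rfl | hc2
        · omega
        · rw [f3 c hc1 hc2]
          have := sc_le_maxScore (tv b) c
          omega
      have hmax2 : maxScore (tv (Function.update b j (a j))) = sc (tv b) w' + 1 := by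
        refine le_antisymm (Finset.sup_le fun c _ => fmax c) ?_
        rw [← f1]
        exact sc_le_maxScore _ _
      have hwinw : IsLexWin (tv (Function.update b j (a j))) w' := by
        refine ⟨mem_winSet_iff.mpr (by omega), fun c hc => ?_⟩
        have hcs := mem_winSet_iff.mp hc
        rw [hmax2] at hcs
        rcases eq_or_ne c w' with rfl | hc1
        · exact le_refl _
        rcases eq_or_ne c cj with rfl | hc2
        · omega
        · have hbs : sc (tv b) c = sc (tv b) w' + 1 := by rw [← f3 c hc1 hc2]; exact hcs
          have hcmax := sc_le_maxScore (tv b) c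
          rcases hcase with hA | ⟨hM2, hlt⟩
          · omega
          · have hcmem : c ∈ winSet (tv b) := mem_winSet_iff.mpr (by omega)
            have := hcj.2 c hcmem
            omega
      have hk2 := key j w' hnej hwinw
      rw [← haj] at hk2
      exact absurd hk2 (not_lt.mpr (ha j cj))
  -- the threshold candidate's truthful score equals its score in b
  have hst : sc (tv a) w' = sc (tv b) w' := by
    rw [sc_tv_sum, sc_tv_sum]
    refine Finset.sum_congr rfl fun j _ => ?_
    refine if_congr ⟨fun haj => L3 j haj, fun hbj => ?_⟩ rfl rfl
    rcases L1 j with h | h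
    · exact h.symm.trans hbj
    · exact absurd (h.symm.trans hbj) (Ne.symm hw'cj)
  -- truthful cw-supporters vote cw or cj
  have hq : maxScore (tv a) ≤ sc (tv b) cw + sc (tv b) cj := by
    rw [← hscw, sc_tv_sum, sc_tv_sum, sc_tv_sum, ← Finset.sum_add_distrib]
    refine Finset.sum_le_sum fun j _ => ?_
    by_cases hj : a j = cw
    · rw [if_pos hj]
      rcases L1 j with h | h
      · rw [if_pos (h.trans hj)]
        exact Nat.le_add_right 1 _
      · rw [if_pos h]
        exact Nat.le_add_left 1 _
    · rw [if_neg hj]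
      exact Nat.zero_le _
  have hbcw_le : sc (tv b) cw ≤ maxScore (tv b) := sc_le_maxScore _ _
  -- final case analysis
  rcases eq_or_ne w' cw with rfl | hwc
  · have hd : sc (tv b) w' + sc (tv b) cj ≤ n := sc_tv_add_le b w' cj (Ne.symm hne)
    omega
  · have hdaw : sc (tv a) w' + sc (tv a) cw ≤ n := sc_tv_add_le a w' cw hwc
    rcases hcase with hA | ⟨hM2, hlt⟩
    · omega
    · rcases eq_or_ne (a i0) cw with hic | hic
      · rw [hic] at hup
        omega
      · have h3 : sc (tv a) cw + sc (tv a) w' + sc (tv a) (a i0) ≤ n :=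
          sc_tv_add3_le a cw w' (a i0) (Ne.symm hwc) (Ne.symm hic) hw'ai
        have h4 : 1 ≤ sc (tv a) (a i0) := sc_tv_one_le a i0
        omega
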